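/- Let $f : [0, \infty) \to \mathbb{R}$ be locally integrable with essential total variation $V := T.V.\{f; (0,\infty)\} < \infty$. For $h > 0$ and $k \geq 0$ define $m_k = \frac{1}{h}\int_{kh}^{(k+1)h} f(t)\, dt$. Then $\sum_{k \geq 1} |m_k - m_{k-1}| \leq V$. -/

import Mathlib

/-!
Substituting `t = s + k h` writes `m_{k+1} - m_k` as the average over `s ∈ (0, h]` of
`f (s + (k + 1) h) - f (s + k h)`. For fixed `s` the points `s, s + h, s + 2h, …` form an
increasing sequence in `(0, ∞)`, so the jumps of `f` along it sum to at most `V`; averaging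
this bound over `s` gives the claim.
-/

open MeasureTheory Set

theorem eVariationOn.tsum_edist_le {α E : Type*} [LinearOrder α] [PseudoEMetricSpace E]
    (f : α → E) {s : Set α} {u : ℕ → α} (hu : Monotone u) (hus : ∀ i, u i ∈ s) :
    ∑' i, edist (f (u (i + 1))) (f (u i)) ≤ eVariationOn f s :=
  ENNReal.tsum_le_of_sum_range_le fun _ => eVariationOn.sum_le hu hus

theorem MeasureTheory.LocallyIntegrableOn.intervalIntegrable_of_Ici_le {E : Type*}
    [NormedAddCommGroup E] {f : ℝ → E} {c a b : ℝ}
    (hf : LocallyIntegrableOn f (Ici c)) (hca : c ≤ a) (hcb : c ≤ b) :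
    IntervalIntegrable f volume a b :=
  (hf.integrableOn_compact_subset (fun _ hx => le_trans (le_min hca hcb) hx.1)
    isCompact_uIcc).intervalIntegrable

theorem IntervalIntegrable.comp_add_right_zero {E : Type*} [NormedAddCommGroup E]
    {f : ℝ → E} {c h : ℝ} (hf : IntervalIntegrable f volume c (c + h)) :
    IntervalIntegrable (fun s => f (s + c)) volume 0 h := by
  simpa [add_comm h] using hf.comp_add_right c

theorem enorm_intervalIntegral_sub_le_lintegral_edist {E : Type*} [NormedAddCommGroup E]
    [NormedSpace ℝ E] {f : ℝ → E} {a b h : ℝ} (hh : 0 ≤ h)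
    (ha : IntervalIntegrable f volume a (a + h)) (hb : IntervalIntegrable f volume b (b + h)) :
    ‖(∫ t in b..b + h, f t) - ∫ t in a..a + h, f t‖ₑ
      ≤ ∫⁻ s in Ioc 0 h, edist (f (s + b)) (f (s + a)) := by
  have hshift : ∀ c, (∫ t in c..c + h, f t) = ∫ s in 0..h, f (s + c) := fun c => by
    rw [intervalIntegral.integral_comp_add_right, zero_add, add_comm h]
  rw [hshift, hshift, ← intervalIntegral.integral_sub hb.comp_add_right_zero
    ha.comp_add_right_zero, intervalIntegral.integral_of_le hh]
  simpa only [edist_eq_enorm_sub] using enorm_integral_le_lintegral_enorm _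

theorem tsum_enorm_sub_intervalIntegral_le_eVariationOn {E : Type*} [NormedAddCommGroup E]
    [NormedSpace ℝ E] {f : ℝ → E} {h : ℝ} (hh : 0 < h) (hf : LocallyIntegrableOn f (Ici 0)) :
    ∑' k : ℕ, ‖(∫ t in (k + 1) * h..(k + 1) * h + h, f t) - ∫ t in k * h..k * h + h, f t‖ₑ
      ≤ ENNReal.ofReal h * eVariationOn f (Ioi 0) := by
  have hint : ∀ c : ℝ, 0 ≤ c → IntervalIntegrable f volume c (c + h) := fun c hc =>
    hf.intervalIntegrable_of_Ici_le hc (by positivity)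
  have hmeas : ∀ k : ℕ, AEMeasurable
      (fun s => edist (f (s + (k + 1) * h)) (f (s + k * h))) (volume.restrict (Ioc 0 h)) := by
    intro k
    have hshift : ∀ c : ℝ, 0 ≤ c →
        AEStronglyMeasurable (fun s => f (s + c)) (volume.restrict (Ioc 0 h)) := fun c hc =>
      ((intervalIntegrable_iff_integrableOn_Ioc_of_le hh.le).1
        (hint c hc).comp_add_right_zero).aestronglyMeasurable
    simpa only [edist_eq_enorm_sub, Pi.sub_apply] using
      ((hshift _ (by positivity)).sub (hshift _ (by positivity))).enorm
  have hpoint : ∀ s ∈ Ioc 0 h,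
      ∑' k : ℕ, edist (f (s + (k + 1) * h)) (f (s + k * h)) ≤ eVariationOn f (Ioi 0) := by
    intro s hs
    have hu : Monotone fun k : ℕ => s + k * h := fun i j hij =>
      add_le_add_right (mul_le_mul_of_nonneg_right (Nat.cast_le.2 hij) hh.le) s
    exact_mod_cast eVariationOn.tsum_edist_le f hu fun k => by
      simp only [mem_Ioi]; nlinarith [hs.1, (k.cast_nonneg : (0:ℝ) ≤ k)]
  calc ∑' k : ℕ, ‖(∫ t in (k + 1) * h..(k + 1) * h + h, f t) - ∫ t in k * h..k * h + h, f t‖ₑ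
      ≤ ∑' k : ℕ, ∫⁻ s in Ioc 0 h, edist (f (s + (k + 1) * h)) (f (s + k * h)) :=
        ENNReal.tsum_le_tsum fun k => enorm_intervalIntegral_sub_le_lintegral_edist hh.le
          (hint _ (by positivity)) (hint _ (by positivity))
    _ = ∫⁻ s in Ioc 0 h, ∑' k : ℕ, edist (f (s + (k + 1) * h)) (f (s + k * h)) :=
        (lintegral_tsum hmeas).symm
    _ ≤ ∫⁻ _ in Ioc 0 h, eVariationOn f (Ioi 0) := setLIntegral_mono' measurableSet_Ioc hpoint
    _ = ENNReal.ofReal h * eVariationOn f (Ioi 0) := by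
        rw [setLIntegral_const, Real.volume_Ioc, sub_zero, mul_comm]

theorem stmt14_general (f : ℝ → ℝ) (h : ℝ) (hh : 0 < h)
    (hloc : LocallyIntegrableOn f (Set.Ici 0)) :
    (∑' k : ℕ,
        ENNReal.ofReal
          |(1 / h) * (∫ t in (((k:ℝ) + 1) * h)..(((k:ℝ) + 2) * h), f t)
            - (1 / h) * (∫ t in ((k:ℝ) * h)..(((k:ℝ) + 1) * h), f t)|)
      ≤ eVariationOn f (Set.Ioi 0) := by
  have hterm : ∀ k : ℕ,
      ENNReal.ofReal |(1 / h) * (∫ t in ((k:ℝ) + 1) * h..((k:ℝ) + 2) * h, f t)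
          - (1 / h) * (∫ t in (k:ℝ) * h..((k:ℝ) + 1) * h, f t)|
        = ‖1 / h‖ₑ *
          ‖(∫ t in (k + 1) * h..(k + 1) * h + h, f t) - ∫ t in k * h..k * h + h, f t‖ₑ := by
    intro k
    rw [← Real.enorm_eq_ofReal_abs, ← mul_sub, enorm_mul]
    ring_nf
  calc _ = ‖1 / h‖ₑ * ∑' k : ℕ,
        ‖(∫ t in (k + 1) * h..(k + 1) * h + h, f t) - ∫ t in k * h..k * h + h, f t‖ₑ := by
        simp only [hterm, ENNReal.tsum_mul_left]
    _ ≤ ‖1 / h‖ₑ * (ENNReal.ofReal h * eVariationOn f (Set.Ioi 0)) := by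
        gcongr
        exact tsum_enorm_sub_intervalIntegral_le_eVariationOn hh hloc
    _ = eVariationOn f (Set.Ioi 0) := by
        rw [← mul_assoc, Real.enorm_eq_ofReal (by positivity), ← ENNReal.ofReal_mul (by positivity),
          one_div_mul_cancel hh.ne', ENNReal.ofReal_one, one_mul]

theorem stmt14 (f : ℝ → ℝ) (h : ℝ) (hh : 0 < h)
    (hloc : LocallyIntegrableOn f (Set.Ici 0))
    (hV : eVariationOn f (Set.Ioi 0) ≠ ⊤) :
    (∑' k : ℕ,
        ENNReal.ofReal
          |(1 / h) * (∫ t in (((k:ℝ) + 1) * h)..(((k:ℝ) + 2) * h), f t)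
            - (1 / h) * (∫ t in ((k:ℝ) * h)..(((k:ℝ) + 1) * h), f t)|)
      ≤ eVariationOn f (Set.Ioi 0) :=
  stmt14_general f h hh hloc
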